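/- arXiv:0806.3277 — 2 statements merged into one kernel-verified Lean document; each statement's English description precedes it below -/
import Mathlib

section
/- McMillan's Theorem: If C is a uniquely decipherable code over a finite nonempty alphabet A with r elements, then its Kraft sum satisfies K(C) ≤ 1. -/
/-! Raising the Kraft sum to the `n`-th power expands it over `n`-tuples of codewords, each
weighted by `r ^ (-ℓ)` where `ℓ` is the length of its concatenation. Unique decipherability makes
concatenation injective on these tuples, so at most `r ^ ℓ` of them have total length `ℓ`, and
each length contributes at most `1`. Hence `K(C) ^ n ≤ m n + 1` with `m` the maximal codeword
length, and linear growth of `K(C) ^ n` forces `K(C) ≤ 1`. -/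

/-- A finite set `C` of strings over `A` is a uniquely decipherable code if the
concatenation map is injective on finite sequences of elements of `C`. -/
def UniquelyDecipherable {A : Type*} (C : Finset (List A)) : Prop :=
  ∀ u v : List (List A), (∀ x ∈ u, x ∈ C) → (∀ x ∈ v, x ∈ C) →
    u.flatten = v.flatten → u = v

/-- The Kraft sum `K(C) = Σ_{x ∈ C} r^{-len(x)}` where `r` is the size of the alphabet. -/
noncomputable def kraftSum {A : Type*} [Fintype A] (C : Finset (List A)) : ℝ :=
  ∑ x ∈ C, (Fintype.card A : ℝ) ^ (-(x.length : ℤ))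

open Finset Filter Topology

theorem le_one_of_pow_le_linear {x a b : ℝ} (h : ∀ n : ℕ, x ^ n ≤ a * n + b) : x ≤ 1 := by
  by_contra! hx
  have hdecay : Tendsto (fun n : ℕ => (a * n + b) / x ^ n) atTop (𝓝 0) := by
    have hlin := (tendsto_pow_const_div_const_pow_of_one_lt 1 hx).const_mul a
    have hgeom := (tendsto_pow_atTop_nhds_zero_of_lt_one (inv_nonneg.2 (by linarith))
      (inv_lt_one_of_one_lt₀ hx)).const_mul b
    have hsum := hlin.add hgeom
    rw [mul_zero, mul_zero, add_zero] at hsum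
    refine hsum.congr fun n => ?_
    rw [pow_one, inv_pow]
    field_simp
  have hone : (1 : ℝ) ≤ 0 := ge_of_tendsto' hdecay fun n => by
    rw [le_div_iff₀ (pow_pos (by linarith) n), one_mul]
    exact h n
  linarith

section Concatenation

variable {A : Type*}

theorem List.length_flatten_ofFn {n : ℕ} (g : Fin n → List A) :
    (List.ofFn g).flatten.length = ∑ i, (g i).length := by
  rw [List.length_flatten, List.map_ofFn, List.sum_ofFn]
  rfl

theorem sum_pow_length_pow_eq_sum_piFinset {R : Type*} [CommSemiring R] (C : Finset (List A))
    (q : R) (n : ℕ) :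
    (∑ x ∈ C, q ^ x.length) ^ n =
      ∑ g ∈ Fintype.piFinset (fun _ : Fin n => C), q ^ (List.ofFn g).flatten.length := by
  classical
  rw [← Fin.prod_const, Finset.prod_univ_sum]
  refine Finset.sum_congr rfl fun g _ => ?_
  rw [Finset.prod_pow_eq_pow_sum, List.length_flatten_ofFn]

theorem length_flatten_ofFn_le_of_mem_piFinset {C : Finset (List A)} {n : ℕ}
    {g : Fin n → List A} (hg : g ∈ Fintype.piFinset fun _ : Fin n => C) :
    (List.ofFn g).flatten.length ≤ C.sup List.length * n := by
  rw [List.length_flatten_ofFn]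
  calc ∑ i, (g i).length ≤ ∑ _i : Fin n, C.sup List.length :=
        Finset.sum_le_sum fun i _ => Finset.le_sup (Fintype.mem_piFinset.1 hg i)
    _ = C.sup List.length * n := by simp [mul_comm]

end Concatenation

theorem kraftSum_eq_sum_inv_pow {A : Type*} [Fintype A] (C : Finset (List A)) :
    kraftSum C = ∑ x ∈ C, (Fintype.card A : ℝ)⁻¹ ^ x.length :=
  Finset.sum_congr rfl fun x _ => by rw [zpow_neg, zpow_natCast, inv_pow]

section Decipherable

variable {A : Type*} {C : Finset (List A)}

theorem UniquelyDecipherable.injOn_flatten_ofFn (hC : UniquelyDecipherable C) (n : ℕ) :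
    Set.InjOn (fun g : Fin n → List A => (List.ofFn g).flatten)
      (Fintype.piFinset fun _ : Fin n => C) := by
  intro g hg g' hg' hflat
  have hmem : ∀ {g : Fin n → List A}, g ∈ Fintype.piFinset (fun _ : Fin n => C) →
      ∀ x ∈ List.ofFn g, x ∈ C := by
    intro g hg x hx
    obtain ⟨i, rfl⟩ := List.mem_ofFn.1 hx
    exact Fintype.mem_piFinset.1 hg i
  exact List.ofFn_injective (hC _ _ (hmem hg) (hmem hg') hflat)

theorem UniquelyDecipherable.card_filter_length_flatten_le [Fintype A]
    (hC : UniquelyDecipherable C) (n ℓ : ℕ) :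
    #{g ∈ Fintype.piFinset (fun _ : Fin n => C) | (List.ofFn g).flatten.length = ℓ}
      ≤ Fintype.card A ^ ℓ := by
  let toList : List.Vector A ℓ ↪ List A := ⟨List.Vector.toList, List.Vector.toList_injective⟩
  calc _ ≤ #(univ.map toList) := by
        refine Finset.card_le_card_of_injOn (fun g => (List.ofFn g).flatten) (fun g hg => ?_)
          ((hC.injOn_flatten_ofFn n).mono (Finset.filter_subset _ _))
        exact Finset.mem_map.2 ⟨⟨_, (Finset.mem_filter.1 hg).2⟩, mem_univ _, rfl⟩
    _ = Fintype.card A ^ ℓ := by rw [Finset.card_map, Finset.card_univ, card_vector]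

theorem UniquelyDecipherable.kraftSum_pow_le [Fintype A] (hC : UniquelyDecipherable C) (n : ℕ) :
    kraftSum C ^ n ≤ C.sup List.length * n + 1 := by
  set r : ℝ := (Fintype.card A : ℝ) with hr
  set m := C.sup List.length
  have hfiber : ∀ ℓ : ℕ, ∑ g ∈ Fintype.piFinset (fun _ : Fin n => C) with
      (List.ofFn g).flatten.length = ℓ, r⁻¹ ^ (List.ofFn g).flatten.length ≤ 1 := by
    intro ℓ
    rw [Finset.sum_congr rfl fun g hg => by rw [(Finset.mem_filter.1 hg).2],
      Finset.sum_const, nsmul_eq_mul]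
    calc _ ≤ r ^ ℓ * r⁻¹ ^ ℓ := by
          gcongr
          rw [hr]
          exact_mod_cast hC.card_filter_length_flatten_le n ℓ
      _ = (r * r⁻¹) ^ ℓ := (mul_pow _ _ _).symm
      _ ≤ 1 := pow_le_one₀ (by positivity) mul_inv_le_one
  have hmaps : ∀ g ∈ Fintype.piFinset (fun _ : Fin n => C),
      (List.ofFn g).flatten.length ∈ range (m * n + 1) := fun g hg =>
    Finset.mem_range_succ_iff.2 (length_flatten_ofFn_le_of_mem_piFinset hg)
  calc kraftSum C ^ n
      = ∑ ℓ ∈ range (m * n + 1), ∑ g ∈ Fintype.piFinset (fun _ : Fin n => C) with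
          (List.ofFn g).flatten.length = ℓ, r⁻¹ ^ (List.ofFn g).flatten.length := by
        rw [kraftSum_eq_sum_inv_pow, sum_pow_length_pow_eq_sum_piFinset,
          Finset.sum_fiberwise_of_maps_to hmaps]
    _ ≤ ∑ _ℓ ∈ range (m * n + 1), (1 : ℝ) := Finset.sum_le_sum fun ℓ _ => hfiber ℓ
    _ = m * n + 1 := by simp

end Decipherable

theorem mcmillan_general {A : Type*} [Fintype A]
    (C : Finset (List A)) (hC : UniquelyDecipherable C) :
    kraftSum C ≤ 1 :=
  le_one_of_pow_le_linear hC.kraftSum_pow_le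

/-- **McMillan's Theorem.** If `C` is a uniquely decipherable code over a finite nonempty
alphabet, then `K(C) ≤ 1`. -/
theorem mcmillan {A : Type*} [Fintype A] [Nonempty A]
    (C : Finset (List A)) (hC : UniquelyDecipherable C) :
    kraftSum C ≤ 1 :=
  mcmillan_general C hC
end

section
/- Inequality (8): Let C and D be nonempty uniquely decipherable codes over a finite nonempty alphabet A with r elements, such that every string in C is a concatenation of a finite sequence of strings in D. Let m be the largest integer n such that some element of C is the concatenation of a sequence of n strings from D. Then for every positive integer k, K(C)^k ≤ mk · K(D)^k. -/
/-!
Expand `K(C)^k` as a sum over `k`-tuples of codewords of `C`. Refactoring each tuple into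
`D`-words (each codeword of `C` has between `1` and `m` of them) is injective because `C` is
uniquely decipherable, and lands in `D`-sequences of length `n ∈ [k, mk]`. For each `n` these
contribute at most `K(D)^n`, and `K(D)^n ≤ K(D)^k` by the Kraft–McMillan inequality
`K(D) ≤ 1`.
-/

open Finset InformationTheory

section

variable {α : Type*}

theorem UniquelyDecipherable.uniquelyDecodable {C : Finset (List α)}
    (hC : UniquelyDecipherable C) : UniquelyDecodable (C : Set (List α)) :=
  hC

theorem kraftSum_eq_sum_one_div_pow [Fintype α] (C : Finset (List α)) :
    kraftSum C = ∑ x ∈ C, (1 / (Fintype.card α : ℝ)) ^ x.length := by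
  refine sum_congr rfl fun x _ => ?_
  rw [zpow_neg, zpow_natCast, one_div, inv_pow]

theorem List.length_flatMap_mem_Icc {β : Type*} {v : List α} {w : α → List β} {a b : ℕ}
    (h : ∀ x ∈ v, (w x).length ∈ Icc a b) :
    (v.flatMap w).length ∈ Icc (v.length * a) (v.length * b) := by
  rw [List.length_flatMap, mem_Icc]
  constructor
  · simpa using List.card_nsmul_le_sum (v.map fun x => (w x).length) a
      (by simpa using fun x hx => (mem_Icc.1 (h x hx)).1)
  · simpa [mul_comm] using List.sum_le_card_nsmul (v.map fun x => (w x).length) b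
      (by simpa using fun x hx => (mem_Icc.1 (h x hx)).2)

theorem List.flatten_flatMap_of_flatten_eq {v : List (List α)} {w : List α → List (List α)}
    (h : ∀ x ∈ v, (w x).flatten = x) : (v.flatMap w).flatten = v.flatten := by
  rw [List.flatMap_def, List.flatten_flatten, List.map_map]
  congr 1
  exact List.map_congr_left h |>.trans (List.map_id v)

theorem UniquelyDecipherable.injOn_flatMap_ofFn {C : Finset (List α)}
    (hC : UniquelyDecipherable C) {w : List α → List (List α)}
    (hw : ∀ x ∈ C, (w x).flatten = x) (k : ℕ) :
    Set.InjOn (fun f : Fin k → List α => (List.ofFn f).flatMap w)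
      (Fintype.piFinset fun _ : Fin k => C) := by
  intro f hf g hg hfg
  simp only [Fintype.coe_piFinset, Set.mem_univ_pi, mem_coe] at hf hg
  refine List.ofFn_inj.1 <|
    hC _ _ (List.forall_mem_ofFn_iff.2 hf) (List.forall_mem_ofFn_iff.2 hg) ?_
  rw [← List.flatten_flatMap_of_flatten_eq (List.forall_mem_ofFn_iff.2 fun i => hw _ (hf i)),
    ← List.flatten_flatMap_of_flatten_eq (List.forall_mem_ofFn_iff.2 fun i => hw _ (hg i))]
  exact congrArg List.flatten hfg

section WeightedSums

variable {R : Type*} [CommSemiring R]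

theorem sum_piFinset_pow_length_flatten_ofFn (q : R) (D : Finset (List α)) (n : ℕ) :
    ∑ f ∈ Fintype.piFinset (fun _ : Fin n => D), q ^ (List.ofFn f).flatten.length =
      (∑ x ∈ D, q ^ x.length) ^ n := by
  classical
  rw [← Fin.prod_const, prod_univ_sum]
  refine sum_congr rfl fun f _ => ?_
  rw [List.length_flatten, List.map_ofFn, List.sum_ofFn, prod_pow_eq_pow_sum]
  rfl

variable [PartialOrder R] [IsOrderedRing R]

theorem sum_pow_length_flatten_le_pow {q : R} (hq : 0 ≤ q) {D : Finset (List α)} {n : ℕ}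
    {U : Finset (List (List α))} (hU : ∀ u ∈ U, u.length = n ∧ ∀ y ∈ u, y ∈ D) :
    ∑ u ∈ U, q ^ u.flatten.length ≤ (∑ x ∈ D, q ^ x.length) ^ n := by
  classical
  have hU_sub : U ⊆ (Fintype.piFinset fun _ : Fin n => D).image List.ofFn := by
    intro u hu
    obtain ⟨rfl, hu_mem⟩ := hU u hu
    exact mem_image.2 ⟨fun i => u[i], Fintype.mem_piFinset.2 fun i => hu_mem _ (by simp),
      List.ofFn_getElem⟩
  calc ∑ u ∈ U, q ^ u.flatten.length
      ≤ ∑ u ∈ (Fintype.piFinset fun _ : Fin n => D).image List.ofFn, q ^ u.flatten.length :=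
        sum_le_sum_of_subset_of_nonneg hU_sub fun _ _ _ => pow_nonneg hq _
    _ ≤ ∑ f ∈ Fintype.piFinset (fun _ : Fin n => D), q ^ (List.ofFn f).flatten.length :=
        sum_image_le_of_nonneg fun _ _ => pow_nonneg hq _
    _ = (∑ x ∈ D, q ^ x.length) ^ n := sum_piFinset_pow_length_flatten_ofFn q D n

theorem sum_pow_length_flatten_le_card_mul_pow {q : R} (hq : 0 ≤ q) {D : Finset (List α)}
    (hD : ∑ x ∈ D, q ^ x.length ≤ 1) {a b : ℕ} {U : Finset (List (List α))}
    (hU : ∀ u ∈ U, u.length ∈ Icc a b ∧ ∀ y ∈ u, y ∈ D) :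
    ∑ u ∈ U, q ^ u.flatten.length ≤ (b + 1 - a : ℕ) * (∑ x ∈ D, q ^ x.length) ^ a := by
  classical
  have hD_nonneg : 0 ≤ ∑ x ∈ D, q ^ x.length := sum_nonneg fun _ _ => pow_nonneg hq _
  rw [← sum_fiberwise_of_maps_to fun u hu => (hU u hu).1, ← Nat.card_Icc, ← nsmul_eq_mul,
    ← sum_const]
  refine sum_le_sum fun n hn => ?_
  calc ∑ u ∈ U with u.length = n, q ^ u.flatten.length
      ≤ (∑ x ∈ D, q ^ x.length) ^ n :=
        sum_pow_length_flatten_le_pow hq fun u hu =>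
          ⟨(mem_filter.1 hu).2, (hU u (mem_filter.1 hu).1).2⟩
    _ ≤ (∑ x ∈ D, q ^ x.length) ^ a := pow_le_pow_of_le_one hD_nonneg hD (mem_Icc.1 hn).1

theorem UniquelyDecipherable.pow_sum_pow_length_le {C D : Finset (List α)}
    (hC : UniquelyDecipherable C) {q : R} (hq : 0 ≤ q) (hD : ∑ x ∈ D, q ^ x.length ≤ 1)
    {w : List α → List (List α)} {a b : ℕ}
    (hw : ∀ x ∈ C, (w x).flatten = x ∧ (w x).length ∈ Icc a b ∧ ∀ y ∈ w x, y ∈ D)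
    (k : ℕ) :
    (∑ x ∈ C, q ^ x.length) ^ k ≤
      (k * b + 1 - k * a : ℕ) * (∑ x ∈ D, q ^ x.length) ^ (k * a) := by
  classical
  set Φ : (Fin k → List α) → List (List α) := fun f => (List.ofFn f).flatMap w
  have hΦ_factors : ∀ u ∈ (Fintype.piFinset fun _ : Fin k => C).image Φ,
      u.length ∈ Icc (k * a) (k * b) ∧ ∀ y ∈ u, y ∈ D := by
    simp only [mem_image, Fintype.mem_piFinset, forall_exists_index, and_imp]
    rintro _ f hf rfl
    refine ⟨?_, fun y hy => ?_⟩
    · simpa [Φ] using List.length_flatMap_mem_Icc (List.forall_mem_ofFn_iff.2 fun i =>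
        (hw _ (hf i)).2.1)
    · obtain ⟨x, hx, hy⟩ := List.mem_flatMap.1 hy
      obtain ⟨i, rfl⟩ := List.mem_ofFn.1 hx
      exact (hw _ (hf i)).2.2 y hy
  calc (∑ x ∈ C, q ^ x.length) ^ k
      = ∑ f ∈ Fintype.piFinset (fun _ : Fin k => C), q ^ (List.ofFn f).flatten.length :=
        (sum_piFinset_pow_length_flatten_ofFn q C k).symm
    _ = ∑ u ∈ (Fintype.piFinset fun _ : Fin k => C).image Φ, q ^ u.flatten.length := by
        rw [sum_image (hC.injOn_flatMap_ofFn (fun x hx => (hw x hx).1) k)]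
        refine sum_congr rfl fun f hf => ?_
        rw [List.flatten_flatMap_of_flatten_eq (List.forall_mem_ofFn_iff.2 fun i =>
          (hw _ (Fintype.mem_piFinset.1 hf i)).1)]
    _ ≤ (k * b + 1 - k * a : ℕ) * (∑ x ∈ D, q ^ x.length) ^ (k * a) :=
        sum_pow_length_flatten_le_card_mul_pow hq hD hΦ_factors

end WeightedSums

end

theorem kraft_pow_le_mul_pow_general {A : Type*} [Fintype A] [Nonempty A]
    (C D : Finset (List A))
    (hC : UniquelyDecipherable C) (hD : UniquelyDecipherable D)
    (hCD : ∀ x ∈ C, ∃ w : List (List A), (∀ y ∈ w, y ∈ D) ∧ w.flatten = x)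
    (m : ℕ)
    (hmax : ∀ n : ℕ,
      (∃ x ∈ C, ∃ w : List (List A), (∀ y ∈ w, y ∈ D) ∧ w.flatten = x ∧ w.length = n) → n ≤ m)
    (k : ℕ) (hk : 0 < k) :
    kraftSum C ^ k ≤ (m * k : ℕ) * kraftSum D ^ k := by
  choose! w hwD hwf using hCD
  have hw : ∀ x ∈ C, (w x).flatten = x ∧ (w x).length ∈ Icc 1 m ∧ ∀ y ∈ w x, y ∈ D := by
    refine fun x hx => ⟨hwf x hx, mem_Icc.2 ⟨List.length_pos_iff.2 fun hnil => ?_,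
      hmax _ ⟨x, hx, w x, hwD x hx, hwf x hx, rfl⟩⟩, hwD x hx⟩
    have hx_nil : x = [] := by rw [← hwf x hx, hnil, List.flatten_nil]
    exact hC.uniquelyDecodable.epsilon_not_mem (hx_nil ▸ hx)
  rw [kraftSum_eq_sum_one_div_pow, kraftSum_eq_sum_one_div_pow]
  refine (hC.pow_sum_pow_length_le (by positivity)
    (kraft_mcmillan_inequality hD.uniquelyDecodable) hw k).trans ?_
  rw [mul_one, mul_comm k m]
  gcongr
  omega

/-- **Inequality (8).** For nonempty uniquely decipherable codes `C ⊆ D̄` with `m` the largest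
number of `D`-factors of an element of `C`, we have `K(C)^k ≤ mk · K(D)^k`. -/
theorem kraft_pow_le_mul_pow {A : Type*} [Fintype A] [Nonempty A]
    (C D : Finset (List A)) (hCne : C.Nonempty) (hDne : D.Nonempty)
    (hC : UniquelyDecipherable C) (hD : UniquelyDecipherable D)
    (hCD : ∀ x ∈ C, ∃ w : List (List A), (∀ y ∈ w, y ∈ D) ∧ w.flatten = x)
    (m : ℕ)
    (hm : ∃ x ∈ C, ∃ w : List (List A), (∀ y ∈ w, y ∈ D) ∧ w.flatten = x ∧ w.length = m)
    (hmax : ∀ n : ℕ,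
      (∃ x ∈ C, ∃ w : List (List A), (∀ y ∈ w, y ∈ D) ∧ w.flatten = x ∧ w.length = n) → n ≤ m)
    (k : ℕ) (hk : 0 < k) :
    kraftSum C ^ k ≤ (m * k : ℕ) * kraftSum D ^ k :=
  kraft_pow_le_mul_pow_general C D hC hD hCD m hmax k hk
end
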